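/- Under the MoSoPI scheme with initialization T_{π_0} v_0 ≥ v_0, the value sequence is monotone: v_{k+1} ≥ v_k componentwise for all k ≥ 0. -/

import Mathlib

open Finset Filter

variable {S A : Type*} [Fintype S] [Fintype A]

/-- Bellman evaluation operator for policy `π`. -/
noncomputable def Tpi (P : S → A → S → ℝ) (r : S → A → ℝ) (γ : ℝ)
    (π : S → A → ℝ) (v : S → ℝ) : S → ℝ :=
  fun s => ∑ a, π s a * (r s a + γ * ∑ s', P s a s' * v s')

/-- Bellman optimality operator. -/
noncomputable def Topt [Nonempty A] (P : S → A → S → ℝ) (r : S → A → ℝ) (γ : ℝ)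
    (v : S → ℝ) : S → ℝ :=
  fun s => Finset.univ.sup' Finset.univ_nonempty
    (fun a => r s a + γ * ∑ s', P s a s' * v s')

/-! Proof idea: the invariant `v k ≤ T_{π_{k+1}} v k` propagates along the scheme. If `u ≤ T u`
for a monotone `T`, then the orbit `T^[n] u` is increasing, so `v (k + 1) = T^[m] (v k)` lies
above `v k` and still satisfies `v (k + 1) ≤ T (v (k + 1))`; the greedy step then replaces `T`
by the next policy's operator. -/

theorem Tpi_monotone (P : S → A → S → ℝ) (r : S → A → ℝ) {γ : ℝ} (hγ : 0 ≤ γ)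
    {p : S → A → ℝ} (hp : ∀ s a, 0 ≤ p s a) (hP : ∀ s a s', 0 ≤ P s a s') :
    Monotone (Tpi P r γ p) := by
  intro u w huw s
  unfold Tpi
  gcongr with a _ s'
  · exact hp s a
  · exact hP s a s'
  · exact huw s'

theorem Monotone.iterate_le_map_iterate_of_le_map {α : Type*} [Preorder α] {f : α → α}
    (hf : Monotone f) {x : α} (hx : x ≤ f x) (n : ℕ) : f^[n] x ≤ f (f^[n] x) := by
  rw [← Function.iterate_succ_apply' f n x]
  exact hf.monotone_iterate_of_le_map hx n.le_succ

/-- Modified policy iteration, abstractly: `T k` is the evaluation operator of the `k`-th policy. -/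
theorem monotone_of_modifiedPolicyIteration {α : Type*} [Preorder α] {T : ℕ → α → α}
    {v : ℕ → α} (m : ℕ) (hT : ∀ k, Monotone (T k))
    (hgreedy : ∀ k, T k (v k) ≤ T (k + 1) (v k))
    (heval : ∀ k, v (k + 1) = (T (k + 1))^[m] (v k))
    (hinit : v 0 ≤ T 0 (v 0)) :
    Monotone v := by
  have hsub : ∀ k, v k ≤ T (k + 1) (v k) := by
    intro k
    induction k with
    | zero => exact hinit.trans (hgreedy 0)
    | succ k ih =>
      refine le_trans ?_ (hgreedy (k + 1))
      rw [heval k]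
      exact (hT (k + 1)).iterate_le_map_iterate_of_le_map ih m
  refine monotone_nat_of_le_succ fun k => ?_
  rw [heval k]
  exact (hT (k + 1)).monotone_iterate_of_le_map (hsub k) (Nat.zero_le m)

theorem stmt_9_general (P : S → A → S → ℝ) (r : S → A → ℝ) (γ : ℝ) (m : ℕ)
    (π : ℕ → S → A → ℝ) (v : ℕ → S → ℝ)
    (hγ0 : 0 < γ)
    (hπ0 : ∀ k s a, 0 ≤ π k s a)
    (hP0 : ∀ s a s', 0 ≤ P s a s')
    (hgreedy : ∀ k, Tpi P r γ (π k) (v k) ≤ Tpi P r γ (π (k + 1)) (v k))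
    (heval : ∀ k, v (k + 1) = (Tpi P r γ (π (k + 1)))^[m] (v k))
    (hinit : v 0 ≤ Tpi P r γ (π 0) (v 0)) :
    ∀ k, v k ≤ v (k + 1) := by
  have hmono : Monotone v :=
    monotone_of_modifiedPolicyIteration m
      (fun k => Tpi_monotone P r hγ0.le (hπ0 k) hP0) hgreedy heval hinit
  exact fun k => hmono k.le_succ

theorem stmt_9 (P : S → A → S → ℝ) (r : S → A → ℝ) (γ : ℝ) (m : ℕ)
    (π : ℕ → S → A → ℝ) (v : ℕ → S → ℝ)
    (hγ0 : 0 < γ) (hγ1 : γ < 1)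
    (hπ0 : ∀ k s a, 0 ≤ π k s a) (hπ1 : ∀ k s, ∑ a, π k s a = 1)
    (hP0 : ∀ s a s', 0 ≤ P s a s') (hP1 : ∀ s a, ∑ s', P s a s' = 1)
    (hm : 1 ≤ m)
    (hgreedy : ∀ k, Tpi P r γ (π k) (v k) ≤ Tpi P r γ (π (k + 1)) (v k))
    (heval : ∀ k, v (k + 1) = (Tpi P r γ (π (k + 1)))^[m] (v k))
    (hinit : v 0 ≤ Tpi P r γ (π 0) (v 0)) :
    ∀ k, v k ≤ v (k + 1) :=
  stmt_9_general P r γ m π v hγ0 hπ0 hP0 hgreedy heval hinit
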